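/- Let a, b, p ∈ ℝ satisfy a > 0, 0 < p < 2a, and 0 < b < (1/4)·min(2a−p, 4p). Then: (a) for all 0 < s < 1, s·|F₋'(s)|·G_{F₋}(s) − H_{F₋}(s) ≥ b·p·(a − b − p/2)·s^{p−1} > b²·p·s^{p−1} > 0; and (b) for all s > 1, s·|F₊'(s)|·G_{F₊}(s) − H_{F₊}(s) ≥ b·p·(a + p/2)·s^{−p−1} > b²·p·s^{−p−1} > 0. -/

import Mathlib

open Real

noncomputable section

/-- `G_F(s) := −(s F'(s))'`. -/
def GF (F : ℝ → ℝ) (s : ℝ) : ℝ := - deriv (fun t => t * deriv F t) s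

/-- `H_F(s) := (1/2)(s G_F(s))'`. -/
def HF (F : ℝ → ℝ) (s : ℝ) : ℝ := (1 / 2) * deriv (fun t => t * GF F t) s

/-- The reparametrization `F₊(s) = −(a+b) log s − (b/p) s^{−p}`. -/
def Fplus (a b p s : ℝ) : ℝ := -(a + b) * Real.log s - (b / p) * s ^ (-p)

/-- The reparametrization `F₋(s) = −(a−b) log s − (b/p) s^{p}`. -/
def Fminus (a b p s : ℝ) : ℝ := -(a - b) * Real.log s - (b / p) * s ^ p

/-!
Both `F₋` and `F₊` are of the form `F(s) = −c log s − (d/q) s^q`, for which `s F'(s) = −c − d s^q`,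
`G_F = d q s^{q−1}` and `H_F = d q² s^{q−1} / 2`, so that
`s |F'| G_F − H_F = d q s^{q−1} (|c + d s^q| − q/2)`.
For `F₋` (`c = a − b`, `d = b`, `q = p`) one has `|c + d s^p| ≥ a − b`; for `F₊`
(`c = a + b`, `d = −b`, `q = −p`) and `s > 1` one has `|c + d s^{−p}| ≥ a + b − b s^{−p} ≥ a`.
The strict inequalities are `a − b − p/2 > b` and `a + p/2 > b`, both read off `b < min(2a − p, 4p)/4`.
-/

def logPowProfile (c d q s : ℝ) : ℝ := -c * Real.log s - (d / q) * s ^ q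

lemma Fminus_eq_logPowProfile (a b p : ℝ) : Fminus a b p = logPowProfile (a - b) b p := rfl

lemma Fplus_eq_logPowProfile (a b p : ℝ) : Fplus a b p = logPowProfile (a + b) (-b) (-p) := by
  funext s
  simp only [Fplus, logPowProfile, neg_div_neg_eq]

section logPowProfile

variable {c d q s : ℝ}

lemma rpow_sub_one_mul_self (hs : 0 < s) (q : ℝ) : s ^ (q - 1) * s = s ^ q := by
  rw [Real.rpow_sub_one hs.ne', div_mul_cancel₀ _ hs.ne']

lemma mul_deriv_logPowProfile (hq : q ≠ 0) (hs : 0 < s) :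
    s * deriv (logPowProfile c d q) s = -c - d * s ^ q := by
  have hF : HasDerivAt (logPowProfile c d q) (-c * s⁻¹ - d / q * (q * s ^ (q - 1))) s :=
    ((Real.hasDerivAt_log hs.ne').const_mul (-c)).sub
      ((Real.hasDerivAt_rpow_const (Or.inl hs.ne')).const_mul (d / q))
  rw [hF.deriv, ← rpow_sub_one_mul_self hs q]
  field_simp

lemma GF_logPowProfile (hq : q ≠ 0) (hs : 0 < s) :
    GF (logPowProfile c d q) s = d * q * s ^ (q - 1) := by
  have hloc : (fun t => t * deriv (logPowProfile c d q) t) =ᶠ[nhds s] fun t => -c - d * t ^ q := by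
    filter_upwards [eventually_gt_nhds hs] with t ht
    exact mul_deriv_logPowProfile hq ht
  have hderiv : HasDerivAt (fun t => -c - d * t ^ q) (-(d * (q * s ^ (q - 1)))) s := by
    simpa using ((Real.hasDerivAt_rpow_const (Or.inl hs.ne')).const_mul d).const_sub (-c)
  rw [GF, hloc.deriv_eq, hderiv.deriv]
  ring

lemma HF_logPowProfile (hq : q ≠ 0) (hs : 0 < s) :
    HF (logPowProfile c d q) s = d * q ^ 2 * s ^ (q - 1) / 2 := by
  have hloc : (fun t => t * GF (logPowProfile c d q) t) =ᶠ[nhds s] fun t => d * q * t ^ q := by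
    filter_upwards [eventually_gt_nhds hs] with t ht
    rw [GF_logPowProfile hq ht, mul_comm t, mul_assoc, rpow_sub_one_mul_self ht]
  have hderiv : HasDerivAt (fun t => d * q * t ^ q) (d * q * (q * s ^ (q - 1))) s :=
    (Real.hasDerivAt_rpow_const (Or.inl hs.ne')).const_mul (d * q)
  rw [HF, hloc.deriv_eq, hderiv.deriv]
  ring

theorem bulk_logPowProfile (hq : q ≠ 0) (hs : 0 < s) :
    s * |deriv (logPowProfile c d q) s| * GF (logPowProfile c d q) s
        - HF (logPowProfile c d q) s =
      d * q * s ^ (q - 1) * (|c + d * s ^ q| - q / 2) := by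
  have habs : s * |deriv (logPowProfile c d q) s| = |c + d * s ^ q| := by
    rw [← abs_of_pos hs, ← abs_mul, abs_of_pos hs, mul_deriv_logPowProfile hq hs, ← abs_neg]
    ring_nf
  rw [habs, GF_logPowProfile hq hs, HF_logPowProfile hq hs]
  ring

end logPowProfile

theorem Fminus_bulk_ge {a b p s : ℝ} (hb : 0 ≤ b) (hp : 0 < p) (hs : 0 < s) :
    s * |deriv (Fminus a b p) s| * GF (Fminus a b p) s - HF (Fminus a b p) s ≥
      b * p * (a - b - p / 2) * s ^ (p - 1) := by
  rw [Fminus_eq_logPowProfile, bulk_logPowProfile hp.ne' hs]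
  have hsp : 0 ≤ b * s ^ p := mul_nonneg hb (Real.rpow_nonneg hs.le p)
  have hcoef : 0 ≤ b * p * s ^ (p - 1) := by positivity
  have := le_abs_self (a - b + b * s ^ p)
  nlinarith

theorem Fplus_bulk_ge {a b p s : ℝ} (hb : 0 ≤ b) (hp : 0 < p) (hs : 1 < s) :
    s * |deriv (Fplus a b p) s| * GF (Fplus a b p) s - HF (Fplus a b p) s ≥
      b * p * (a + p / 2) * s ^ (-p - 1) := by
  have hs0 : 0 < s := one_pos.trans hs
  rw [Fplus_eq_logPowProfile, bulk_logPowProfile (neg_ne_zero.mpr hp.ne') hs0, sub_eq_add_neg]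
  have hsp : b * s ^ (-p) ≤ b :=
    mul_le_of_le_one_right hb (Real.rpow_le_one_of_one_le_of_nonpos hs.le (by linarith))
  have hcoef : 0 ≤ b * p * s ^ (-p + -1) := by positivity
  have := le_abs_self (a + b + -b * s ^ (-p))
  nlinarith

theorem F_pm_bulk_positivity_general (a b p : ℝ)
    (hb : 0 < b) (hb' : b < (1 / 4) * min (2 * a - p) (4 * p)) :
    (∀ s : ℝ, 0 < s → s < 1 →
      s * |deriv (Fminus a b p) s| * GF (Fminus a b p) s - HF (Fminus a b p) s ≥
        b * p * (a - b - p / 2) * s ^ (p - 1) ∧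
      b * p * (a - b - p / 2) * s ^ (p - 1) > b ^ 2 * p * s ^ (p - 1) ∧
      (0 : ℝ) < b ^ 2 * p * s ^ (p - 1)) ∧
    (∀ s : ℝ, 1 < s →
      s * |deriv (Fplus a b p) s| * GF (Fplus a b p) s - HF (Fplus a b p) s ≥
        b * p * (a + p / 2) * s ^ (-p - 1) ∧
      b * p * (a + p / 2) * s ^ (-p - 1) > b ^ 2 * p * s ^ (-p - 1) ∧
      (0 : ℝ) < b ^ 2 * p * s ^ (-p - 1)) := by
  have h4b : 4 * b < 2 * a - p := by linarith [min_le_left (2 * a - p) (4 * p)]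
  have hbp : b < p := by linarith [min_le_right (2 * a - p) (4 * p)]
  have hp : 0 < p := hb.trans hbp
  have hbp_pos : 0 < b * p := mul_pos hb hp
  constructor
  · intro s hs _
    have hpow : 0 < s ^ (p - 1) := Real.rpow_pos_of_pos hs _
    refine ⟨Fminus_bulk_ge hb.le hp hs, ?_, by positivity⟩
    nlinarith [mul_pos hbp_pos hpow]
  · intro s hs
    have hpow : 0 < s ^ (-p - 1) := Real.rpow_pos_of_pos (one_pos.trans hs) _
    refine ⟨Fplus_bulk_ge hb.le hp hs, ?_, by positivity⟩
    nlinarith [mul_pos hbp_pos hpow]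

/-- **Lemma 2.14** (positivity of the Carleman bulk coefficients): under `a > 0`,
`0 < p < 2a`, `0 < b < (1/4)min(2a−p, 4p)`, one has
`s|F₋'|G_{F₋} − H_{F₋} ≥ bp(a−b−p/2)s^{p−1} > b²p s^{p−1} > 0` on `(0,1)` and
`s|F₊'|G_{F₊} − H_{F₊} ≥ bp(a+p/2)s^{−p−1} > b²p s^{−p−1} > 0` on `(1,∞)`. -/
theorem F_pm_bulk_positivity (a b p : ℝ) (ha : 0 < a) (hp : 0 < p) (hpa : p < 2 * a)
    (hb : 0 < b) (hb' : b < (1 / 4) * min (2 * a - p) (4 * p)) :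
    (∀ s : ℝ, 0 < s → s < 1 →
      s * |deriv (Fminus a b p) s| * GF (Fminus a b p) s - HF (Fminus a b p) s ≥
        b * p * (a - b - p / 2) * s ^ (p - 1) ∧
      b * p * (a - b - p / 2) * s ^ (p - 1) > b ^ 2 * p * s ^ (p - 1) ∧
      (0 : ℝ) < b ^ 2 * p * s ^ (p - 1)) ∧
    (∀ s : ℝ, 1 < s →
      s * |deriv (Fplus a b p) s| * GF (Fplus a b p) s - HF (Fplus a b p) s ≥
        b * p * (a + p / 2) * s ^ (-p - 1) ∧
      b * p * (a + p / 2) * s ^ (-p - 1) > b ^ 2 * p * s ^ (-p - 1) ∧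
      (0 : ℝ) < b ^ 2 * p * s ^ (-p - 1)) :=
  F_pm_bulk_positivity_general a b p hb hb'
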